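/- For z ∈ ℝⁿ, the softmax Jacobian J(z) = diag(s) − s sᵀ (with s = softmax(z)) is symmetric positive semidefinite with operator norm at most 1/2, and hence the softmax map is Lipschitz with constant 1/2 in the Euclidean norm. -/

import Mathlib

/-!
With `s = softmax z`, a probability vector, the Jacobian is `J = diag s - s sᵀ`. Its quadratic
form `xᵀ J x = ∑ sᵢ xᵢ² - (∑ sᵢ xᵢ)²` is a variance, hence nonnegative. The absolute values in
row `i` of `J` sum to `sᵢ (1 - sᵢ) + sᵢ (1 - sᵢ) ≤ 1/2`, and `J` is symmetric, so the Schur test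
(`‖A x‖² ≤ R C ‖x‖²` when the absolute row sums are at most `R` and the column sums at most `C`)
bounds the operator norm by `1/2`. The Lipschitz bound is then the mean value inequality.
-/

/-- Softmax of a vector. -/
noncomputable def softmaxVec {n : ℕ} (z : Fin n → ℝ) : Fin n → ℝ :=
  fun i => Real.exp (z i) / ∑ k, Real.exp (z k)

open Matrix

namespace Matrix

variable {m n : Type*} [Fintype m] [Fintype n]

theorem sum_sq_mulVec_le_of_sum_abs_le (A : Matrix m n ℝ) {R C : ℝ} (hR₀ : 0 ≤ R)
    (hR : ∀ i, ∑ j, |A i j| ≤ R) (hC : ∀ j, ∑ i, |A i j| ≤ C) (x : n → ℝ) :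
    ∑ i, (A *ᵥ x) i ^ 2 ≤ R * C * ∑ j, x j ^ 2 := by
  have row (i : m) : (A *ᵥ x) i ^ 2 ≤ R * ∑ j, |A i j| * x j ^ 2 :=
    calc (A *ᵥ x) i ^ 2 = (∑ j, A i j * x j) ^ 2 := rfl
      _ ≤ (∑ j, |A i j|) * ∑ j, |A i j| * x j ^ 2 :=
        Finset.sum_sq_le_sum_mul_sum_of_sq_le_mul _ (fun j _ => abs_nonneg _)
          (fun j _ => by positivity)
          fun j _ => le_of_eq (by rw [mul_pow, ← sq_abs (A i j)]; ring)
      _ ≤ R * ∑ j, |A i j| * x j ^ 2 :=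
        mul_le_mul_of_nonneg_right (hR i) (Finset.sum_nonneg fun j _ => by positivity)
  calc ∑ i, (A *ᵥ x) i ^ 2 ≤ ∑ i, R * ∑ j, |A i j| * x j ^ 2 := Finset.sum_le_sum fun i _ => row i
    _ = R * ∑ j, (∑ i, |A i j|) * x j ^ 2 := by
      rw [← Finset.mul_sum, Finset.sum_comm]; simp_rw [Finset.sum_mul]
    _ ≤ R * ∑ j, C * x j ^ 2 := by gcongr with j; exact hC j
    _ = R * C * ∑ j, x j ^ 2 := by rw [← Finset.mul_sum, mul_assoc]

theorem opNorm_toEuclideanLin_le_of_sum_abs_le [DecidableEq n] (A : Matrix m n ℝ) {c : ℝ}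
    (hc : 0 ≤ c) (hR : ∀ i, ∑ j, |A i j| ≤ c) (hC : ∀ j, ∑ i, |A i j| ≤ c) :
    ‖(toEuclideanLin A).toContinuousLinearMap‖ ≤ c := by
  refine ContinuousLinearMap.opNorm_le_bound _ hc fun x => ?_
  rw [← pow_le_pow_iff_left₀ (norm_nonneg _) (by positivity) two_ne_zero, mul_pow,
    EuclideanSpace.real_norm_sq_eq, EuclideanSpace.real_norm_sq_eq, sq c]
  exact sum_sq_mulVec_le_of_sum_abs_le A hc hR hC x

end Matrix

section softmaxJacobian

variable {ι : Type*} [DecidableEq ι] (s : ι → ℝ)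

/-- The Jacobian of softmax, as a function of the value `s` of softmax rather than of the point. -/
def softmaxJacobian : Matrix ι ι ℝ := diagonal s - vecMulVec s s

theorem softmaxJacobian_apply (i j : ι) :
    softmaxJacobian s i j = s i * ((if i = j then 1 else 0) - s j) := by
  by_cases h : i = j <;> simp [softmaxJacobian, vecMulVec, diagonal, h, mul_sub]

theorem softmaxJacobian_isSymm : (softmaxJacobian s).IsSymm :=
  (isSymm_diagonal s).sub (transpose_vecMulVec s s)

theorem softmaxJacobian_mulVec [Fintype ι] (x : ι → ℝ) :
    softmaxJacobian s *ᵥ x = s * x - (s ⬝ᵥ x) • s := by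
  ext i
  simp only [softmaxJacobian, sub_mulVec, vecMulVec_mulVec, op_smul_eq_smul, mulVec_diagonal,
    Pi.sub_apply, Pi.mul_apply]

theorem dotProduct_softmaxJacobian_mulVec [Fintype ι] (x : ι → ℝ) :
    x ⬝ᵥ (softmaxJacobian s *ᵥ x) = ∑ i, s i * x i ^ 2 - (s ⬝ᵥ x) ^ 2 := by
  rw [softmaxJacobian_mulVec, dotProduct_sub, dotProduct_smul, smul_eq_mul, dotProduct_comm x s,
    ← sq]
  congr 1
  exact Finset.sum_congr rfl fun i _ => by simp only [Pi.mul_apply]; ring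

theorem softmaxJacobian_posSemidef [Fintype ι] (hs : 0 ≤ s) (hs₁ : ∑ i, s i ≤ 1) :
    (softmaxJacobian s).PosSemidef := by
  refine .of_dotProduct_mulVec_nonneg (isHermitian_iff_isSymm.2 (softmaxJacobian_isSymm s))
    fun x => ?_
  rw [star_trivial, dotProduct_softmaxJacobian_mulVec, sub_nonneg]
  calc (s ⬝ᵥ x) ^ 2 = (∑ i, s i * x i) ^ 2 := rfl
    _ ≤ (∑ i, s i) * ∑ i, s i * x i ^ 2 :=
      Finset.sum_sq_le_sum_mul_sum_of_sq_le_mul _ (fun i _ => hs i)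
        (fun i _ => mul_nonneg (hs i) (sq_nonneg _)) fun i _ => le_of_eq (by ring)
    _ ≤ ∑ i, s i * x i ^ 2 :=
      mul_le_of_le_one_left (Finset.sum_nonneg fun i _ => mul_nonneg (hs i) (sq_nonneg _)) hs₁

theorem sum_abs_softmaxJacobian_le [Fintype ι] (hs : 0 ≤ s) (hs₁ : ∑ i, s i ≤ 1) (i : ι) :
    ∑ j, |softmaxJacobian s i j| ≤ 1 / 2 := by
  have hs_le_one (j : ι) : s j ≤ 1 :=
    (Finset.single_le_sum (fun k _ => hs k) (Finset.mem_univ j)).trans hs₁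
  have habs (j : ι) :
      |softmaxJacobian s i j| = s i * ((if i = j then 1 - 2 * s j else 0) + s j) := by
    rw [softmaxJacobian_apply, abs_mul, abs_of_nonneg (hs i)]
    split_ifs
    · rw [abs_of_nonneg (sub_nonneg.2 (hs_le_one j))]; ring
    · rw [zero_sub, abs_neg, abs_of_nonneg (hs j)]; ring
  calc ∑ j, |softmaxJacobian s i j| = s i * (1 - 2 * s i + ∑ j, s j) := by
        simp only [habs, ← Finset.mul_sum, Finset.sum_add_distrib, Finset.sum_ite_eq,
          Finset.mem_univ, if_true]
    _ ≤ s i * (2 - 2 * s i) := mul_le_mul_of_nonneg_left (by linarith) (hs i)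
    _ ≤ 1 / 2 := by nlinarith [sq_nonneg (2 * s i - 1)]

theorem opNorm_toEuclideanLin_softmaxJacobian_le [Fintype ι] (hs : 0 ≤ s) (hs₁ : ∑ i, s i ≤ 1) :
    ‖(toEuclideanLin (softmaxJacobian s)).toContinuousLinearMap‖ ≤ 1 / 2 :=
  opNorm_toEuclideanLin_le_of_sum_abs_le _ (by norm_num) (sum_abs_softmaxJacobian_le s hs hs₁)
    fun j => by
      simpa only [← (softmaxJacobian_isSymm s).apply j] using sum_abs_softmaxJacobian_le s hs hs₁ j

end softmaxJacobian

theorem softmaxVec_nonneg {n : ℕ} (z : Fin n → ℝ) : 0 ≤ softmaxVec z := fun _ =>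
  div_nonneg (Real.exp_pos _).le (Finset.sum_nonneg fun _ _ => (Real.exp_pos _).le)

-- Equality holds unless `n = 0`.
theorem sum_softmaxVec_le_one {n : ℕ} (z : Fin n → ℝ) : ∑ i, softmaxVec z i ≤ 1 := by
  simp only [softmaxVec, ← Finset.sum_div]
  exact div_self_le_one _

theorem hasFDerivAt_softmaxVec {n : ℕ} (w : Fin n → ℝ) :
    HasFDerivAt softmaxVec (softmaxJacobian (softmaxVec w)).mulVecLin.toContinuousLinearMap w := by
  refine hasFDerivAt_pi'.2 fun i => ?_
  have hS : 0 < ∑ k, Real.exp (w k) :=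
    Finset.sum_pos (fun k _ => Real.exp_pos _) ⟨i, Finset.mem_univ i⟩
  have hexp : HasFDerivAt (fun y : Fin n → ℝ => Real.exp (y i))
      (Real.exp (w i) • ContinuousLinearMap.proj i) w :=
    (hasFDerivAt_apply i w).exp
  have hsum : HasFDerivAt (fun y : Fin n → ℝ => ∑ k, Real.exp (y k))
      (∑ k, Real.exp (w k) • ContinuousLinearMap.proj k) w :=
    HasFDerivAt.fun_sum fun k _ => (hasFDerivAt_apply k w).exp
  refine (hexp.mul ((hasDerivAt_inv hS.ne').comp_hasFDerivAt w hsum)).congr_fderiv ?_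
  ext v
  simp only [_root_.add_apply, _root_.smul_apply, _root_.sum_apply, ContinuousLinearMap.proj_apply,
    ContinuousLinearMap.coe_comp, Function.comp_apply, smul_eq_mul,
    LinearMap.coe_toContinuousLinearMap', mulVecLin_apply, softmaxJacobian_mulVec,
    Pi.sub_apply, Pi.mul_apply, Pi.smul_apply, dotProduct, softmaxVec, div_mul_eq_mul_div,
    ← Finset.sum_div]
  field_simp
  ring

theorem lipschitzWith_softmaxVec {n : ℕ} :
    LipschitzWith (1 / 2) (fun w : EuclideanSpace ℝ (Fin n) =>
      ((WithLp.equiv 2 (Fin n → ℝ)).symm (softmaxVec w) : EuclideanSpace ℝ (Fin n))) := by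
  have hderiv (w : EuclideanSpace ℝ (Fin n)) :
      HasFDerivAt (fun w : EuclideanSpace ℝ (Fin n) =>
        ((WithLp.equiv 2 (Fin n → ℝ)).symm (softmaxVec w) : EuclideanSpace ℝ (Fin n)))
        (toEuclideanLin (softmaxJacobian (softmaxVec w))).toContinuousLinearMap w :=
    ((PiLp.hasFDerivAt_toLp 2 _).comp w
      ((hasFDerivAt_softmaxVec _).comp w (PiLp.hasFDerivAt_ofLp 2 w))).congr_fderiv
      (ContinuousLinearMap.ext fun _ => rfl)
  refine lipschitzOnWith_univ.1 (convex_univ.lipschitzOnWith_of_nnnorm_hasFDerivWithin_le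
    (fun w _ => (hderiv w).hasFDerivWithinAt) fun w _ => ?_)
  rw [← NNReal.coe_le_coe, coe_nnnorm]
  exact opNorm_toEuclideanLin_softmaxJacobian_le _ (softmaxVec_nonneg _) (sum_softmaxVec_le_one _)

/-- The softmax Jacobian J = diag(s) − s sᵀ is symmetric positive semidefinite with
    operator norm at most 1/2, and softmax is 1/2-Lipschitz in the Euclidean norm. -/
theorem softmax_jacobian_psd_and_lipschitz {n : ℕ} (z : Fin n → ℝ) :
    let s := softmaxVec z
    let J : Matrix (Fin n) (Fin n) ℝ :=
      fun i j => s i * ((if i = j then (1:ℝ) else 0) - s j)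
    J.IsSymm ∧ J.PosSemidef ∧
      ‖LinearMap.toContinuousLinearMap (Matrix.toEuclideanLin J)‖ ≤ 1/2 ∧
      LipschitzWith (1/2) (fun w : EuclideanSpace ℝ (Fin n) =>
        ((WithLp.equiv 2 (Fin n → ℝ)).symm (softmaxVec w) : EuclideanSpace ℝ (Fin n))) := by
  intro s J
  have hJ : J = softmaxJacobian s := funext₂ fun i j => (softmaxJacobian_apply s i j).symm
  rw [hJ]
  exact ⟨softmaxJacobian_isSymm s,
    softmaxJacobian_posSemidef s (softmaxVec_nonneg z) (sum_softmaxVec_le_one z),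
    opNorm_toEuclideanLin_softmaxJacobian_le s (softmaxVec_nonneg z) (sum_softmaxVec_le_one z),
    lipschitzWith_softmaxVec⟩
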